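/- arXiv:2604.12454 — 5 statements merged into one kernel-verified Lean document; each statement's English description precedes it below -/
import Mathlib

section
/- Let (X,d) be a complete metric space and T : X → X a continuous map. Suppose there exist functions φₙ : X × X → [0,∞) with d(Tⁿx, Tⁿy) ≤ φₙ(x,y) for all x,y ∈ X and n ∈ ℕ, such that φₙ converges pointwise to a function φ : X × X → [0,∞), the convergence being uniform on B × B for every bounded subset B ⊂ X; and suppose there is a function ψ : [0,∞) → [0,∞), nondecreasing, right upper semicontinuous, with ψ(t) < t for all t > 0, such that φ(x,y) ≤ ψ(M(x,y)) for all x,y, where M(x,y) = max{d(x,y), d(Tx,x), d(Ty,y), d(Ty,x), d(Tx,y)}. If there exists x₀ ∈ X whose orbit {Tⁿx₀ : n ∈ ℕ} is bounded, then T has a unique fixed point z ∈ X and the sequence Tⁿx₀ converges to z. -/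
/-!
The tail diameters `D j = diam {Tⁿ x₀ : n ≥ j}` of the bounded orbit decrease, and uniform
convergence of `φₙ` on the orbit gives `D (N + j) ≤ ψ (D j) + ε` for large `N`, because
`M(Tᵐ x₀, Tᵏ x₀) ≤ D j` whenever `m, k ≥ j`. Hence the limit `L` of `D` satisfies
`L ≤ ψ (D j)` for all `j`; as `D j ↓ L`, right upper semicontinuity of `ψ` at `L` gives
`L ≤ ψ L`, so `L = 0`. The orbit is therefore Cauchy, and its limit is fixed by continuity.
Two fixed points `w, z` satisfy `d(w, z) ≤ φ(w, z) ≤ ψ(d(w, z))`, so they coincide.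
-/

open Set Filter Function Topology

section RealSequences

theorem isBoundedUnder_le_nhdsGT_of_monotoneOn {ψ : ℝ → ℝ} {L : ℝ}
    (hψ : MonotoneOn ψ (Ioi L)) : IsBoundedUnder (· ≤ ·) (𝓝[>] L) ψ :=
  ⟨ψ (L + 1), eventually_map.2 <| by
    filter_upwards [Ioc_mem_nhdsGT (lt_add_one L)] with t ht
    exact hψ ht.1 (lt_add_one L) ht.2⟩

theorem eq_zero_of_tendsto_of_le_comp {ψ : ℝ → ℝ} {D : ℕ → ℝ} {L : ℝ}
    (hψ_bdd : IsBoundedUnder (· ≤ ·) (𝓝[>] L) ψ) (hψ_usc : limsup ψ (𝓝[>] L) ≤ ψ L)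
    (hψ_lt : ∀ t, 0 < t → ψ t < t) (hL0 : 0 ≤ L) (hDL : ∀ j, L ≤ D j)
    (hD : Tendsto D atTop (𝓝 L)) (hLψ : ∀ j, L ≤ ψ (D j)) : L = 0 := by
  by_contra hL
  have hψL : ψ L < L := hψ_lt L (hL0.lt_of_ne' hL)
  have hψ_lt_L : ∀ᶠ t in 𝓝[≥] L, ψ t < L := by
    rw [← nhdsGT_sup_nhdsWithin_singleton, nhdsWithin_singleton]
    exact eventually_sup.2
      ⟨eventually_lt_of_limsup_lt (hψ_usc.trans_lt hψL) hψ_bdd, eventually_pure.2 hψL⟩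
  have hD' : Tendsto D atTop (𝓝[≥] L) :=
    tendsto_nhdsWithin_of_tendsto_nhds_of_eventually_within D hD (.of_forall hDL)
  obtain ⟨j, hj⟩ := (hD'.eventually hψ_lt_L).exists
  exact (hLψ j).not_gt hj

theorem tendsto_zero_of_antitone_of_le_comp_add {ψ : ℝ → ℝ} {D : ℕ → ℝ}
    (hψ_mono : MonotoneOn ψ (Ici 0)) (hψ_usc : ∀ t, 0 ≤ t → limsup ψ (𝓝[>] t) ≤ ψ t)
    (hψ_lt : ∀ t, 0 < t → ψ t < t) (hD0 : ∀ j, 0 ≤ D j) (hD : Antitone D)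
    (hDψ : ∀ ε > 0, ∃ N, ∀ j, D (N + j) ≤ ψ (D j) + ε) : Tendsto D atTop (𝓝 0) := by
  have hbdd : BddBelow (range D) := ⟨0, forall_mem_range.2 hD0⟩
  have hL0 : 0 ≤ ⨅ j, D j := le_ciInf hD0
  have hDL : ∀ j, ⨅ i, D i ≤ D j := ciInf_le hbdd
  have hLψ : ∀ j, ⨅ i, D i ≤ ψ (D j) := fun j => le_of_forall_pos_le_add fun ε hε => by
    obtain ⟨N, hN⟩ := hDψ ε hε
    exact (hDL (N + j)).trans (hN j)
  have hDt := tendsto_atTop_ciInf hD hbdd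
  have hψ_bdd := isBoundedUnder_le_nhdsGT_of_monotoneOn
    (hψ_mono.mono fun _ (ht : _ < _) => hL0.trans ht.le)
  rwa [eq_zero_of_tendsto_of_le_comp hψ_bdd (hψ_usc _ hL0) hψ_lt hL0 hDL hDt hLψ] at hDt

end RealSequences

section TailDiam

variable {X : Type*} [MetricSpace X] {x : ℕ → X}

noncomputable def tailDiam (x : ℕ → X) (j : ℕ) : ℝ := Metric.diam (x '' Ici j)

theorem tailDiam_nonneg (x : ℕ → X) (j : ℕ) : 0 ≤ tailDiam x j := Metric.diam_nonneg

theorem dist_le_tailDiam (hx : Bornology.IsBounded (range x)) {j a b : ℕ} (ha : j ≤ a)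
    (hb : j ≤ b) : dist (x a) (x b) ≤ tailDiam x j :=
  Metric.dist_le_diam_of_mem (hx.subset (image_subset_range _ _)) (mem_image_of_mem x ha)
    (mem_image_of_mem x hb)

theorem tailDiam_le_of_forall_dist_le {j : ℕ} {C : ℝ}
    (h : ∀ a b, j ≤ a → j ≤ b → dist (x a) (x b) ≤ C) : tailDiam x j ≤ C :=
  Metric.diam_le_of_forall_dist_le_of_nonempty ⟨x j, mem_image_of_mem x self_mem_Ici⟩ <| by
    rintro _ ⟨a, ha, rfl⟩ _ ⟨b, hb, rfl⟩
    exact h a b ha hb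

theorem tailDiam_antitone (hx : Bornology.IsBounded (range x)) : Antitone (tailDiam x) :=
  fun _ _ hij => Metric.diam_mono (image_mono (Ici_subset_Ici.2 hij))
    (hx.subset (image_subset_range _ _))

theorem cauchySeq_of_tendsto_tailDiam (hx : Bornology.IsBounded (range x))
    (h : Tendsto (tailDiam x) atTop (𝓝 0)) : CauchySeq x :=
  cauchySeq_of_le_tendsto_0 _ (fun _ _ _ => dist_le_tailDiam hx) h

end TailDiam

section AsymptoticPointwiseContraction

variable {X : Type*} [MetricSpace X] {T : X → X}

/-- The quantity `M(x, y)` of the contraction condition. -/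
def ciricMax (T : X → X) (x y : X) : ℝ :=
  max (dist x y) (max (dist (T x) x) (max (dist (T y) y) (max (dist (T y) x) (dist (T x) y))))

theorem ciricMax_nonneg (T : X → X) (x y : X) : 0 ≤ ciricMax T x y :=
  le_max_of_le_left dist_nonneg

theorem ciricMax_of_isFixedPt {x y : X} (hx : IsFixedPt T x) (hy : IsFixedPt T y) :
    ciricMax T x y = dist x y := by
  simp only [ciricMax, hx.eq, hy.eq, dist_self, dist_comm y x, max_eq_right dist_nonneg,
    max_self]

theorem ciricMax_iterate_le_tailDiam {x₀ : X} (hx₀ : Bornology.IsBounded (range (T^[·] x₀)))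
    {j m k : ℕ} (hm : j ≤ m) (hk : j ≤ k) :
    ciricMax T (T^[m] x₀) (T^[k] x₀) ≤ tailDiam (T^[·] x₀) j := by
  have hdist {a b : ℕ} (ha : j ≤ a) (hb : j ≤ b) := dist_le_tailDiam hx₀ ha hb
  simp only [ciricMax, ← iterate_succ_apply' T]
  exact max_le (hdist hm hk) <| max_le (hdist (by omega) hm) <| max_le (hdist (by omega) hk) <|
    max_le (hdist (by omega) hm) (hdist (by omega) hk)

variable {φ : ℕ → X → X → ℝ} {φlim : X → X → ℝ} {ψ : ℝ → ℝ}

theorem tailDiam_iterate_add_le {x₀ : X} (hx₀ : Bornology.IsBounded (range (T^[·] x₀)))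
    (hd : ∀ n x y, dist (T^[n] x) (T^[n] y) ≤ φ n x y)
    (hφψ : ∀ x y, φlim x y ≤ ψ (ciricMax T x y)) (hψ : MonotoneOn ψ (Ici 0)) {N : ℕ} {ε : ℝ}
    (hN : ∀ m k, φ N (T^[m] x₀) (T^[k] x₀) ≤ φlim (T^[m] x₀) (T^[k] x₀) + ε) (j : ℕ) :
    tailDiam (T^[·] x₀) (N + j) ≤ ψ (tailDiam (T^[·] x₀) j) + ε := by
  refine tailDiam_le_of_forall_dist_le fun a b ha hb => ?_
  obtain ⟨m, rfl⟩ := Nat.exists_eq_add_of_le (le_of_add_le_left ha)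
  obtain ⟨k, rfl⟩ := Nat.exists_eq_add_of_le (le_of_add_le_left hb)
  have hM := ciricMax_iterate_le_tailDiam hx₀ (by omega : j ≤ m) (by omega : j ≤ k)
  calc dist (T^[N + m] x₀) (T^[N + k] x₀)
      = dist (T^[N] (T^[m] x₀)) (T^[N] (T^[k] x₀)) := by rw [iterate_add_apply, iterate_add_apply]
    _ ≤ φ N (T^[m] x₀) (T^[k] x₀) := hd _ _ _
    _ ≤ φlim (T^[m] x₀) (T^[k] x₀) + ε := hN m k
    _ ≤ ψ (ciricMax T (T^[m] x₀) (T^[k] x₀)) + ε := by gcongr; exact hφψ _ _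
    _ ≤ ψ (tailDiam (T^[·] x₀) j) + ε := by
      gcongr
      exact hψ (ciricMax_nonneg _ _ _) (tailDiam_nonneg _ _) hM

theorem eq_of_isFixedPt (hd : ∀ n x y, dist (T^[n] x) (T^[n] y) ≤ φ n x y)
    (hconv : ∀ x y, Tendsto (fun n => φ n x y) atTop (𝓝 (φlim x y)))
    (hφψ : ∀ x y, φlim x y ≤ ψ (ciricMax T x y)) (hψ_lt : ∀ t, 0 < t → ψ t < t) {w z : X}
    (hw : IsFixedPt T w) (hz : IsFixedPt T z) : w = z := by
  have hφ (n : ℕ) : dist w z ≤ φ n w z := by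
    simpa only [(hw.iterate n).eq, (hz.iterate n).eq] using hd n w z
  have hle : dist w z ≤ ψ (dist w z) :=
    calc dist w z ≤ φlim w z := ge_of_tendsto' (hconv w z) hφ
      _ ≤ ψ (ciricMax T w z) := hφψ w z
      _ = ψ (dist w z) := by rw [ciricMax_of_isFixedPt hw hz]
  by_contra hne
  exact (hψ_lt _ (dist_pos.2 hne)).not_ge hle

end AsymptoticPointwiseContraction

theorem stmt_4_general {X : Type*} [MetricSpace X] [CompleteSpace X]
    (T : X → X) (hT : Continuous T)
    (φ : ℕ → X → X → ℝ) (φlim : X → X → ℝ)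
    (hd : ∀ n x y, dist (T^[n] x) (T^[n] y) ≤ φ n x y)
    (hconv : ∀ x y, Tendsto (fun n => φ n x y) atTop (nhds (φlim x y)))
    (hunif : ∀ B : Set X, Bornology.IsBounded B → ∀ ε > 0, ∃ N, ∀ n ≥ N,
      ∀ x ∈ B, ∀ y ∈ B, |φ n x y - φlim x y| ≤ ε)
    (ψ : ℝ → ℝ)
    (hψ_mono : ∀ s t, 0 ≤ s → s ≤ t → ψ s ≤ ψ t)
    (hψ_usc : ∀ t₀, 0 ≤ t₀ → limsup ψ (nhdsWithin t₀ (Ioi t₀)) ≤ ψ t₀)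
    (hψ_lt : ∀ t, 0 < t → ψ t < t)
    (hφψ : ∀ x y, φlim x y ≤ ψ (max (dist x y) (max (dist (T x) x)
      (max (dist (T y) y) (max (dist (T y) x) (dist (T x) y))))))
    (x₀ : X) (hx₀ : Bornology.IsBounded (Set.range fun n => T^[n] x₀)) :
    ∃ z : X, T z = z ∧ (∀ w, T w = w → w = z) ∧
      Tendsto (fun n => T^[n] x₀) atTop (nhds z) := by
  have hψ : MonotoneOn ψ (Ici 0) := fun s hs _ _ hst => hψ_mono _ _ hs hst
  have hdiam : Tendsto (tailDiam (T^[·] x₀)) atTop (𝓝 0) :=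
    tendsto_zero_of_antitone_of_le_comp_add hψ hψ_usc hψ_lt (tailDiam_nonneg _)
      (tailDiam_antitone hx₀) fun ε hε => by
        obtain ⟨N, hN⟩ := hunif _ hx₀ ε hε
        refine ⟨N, tailDiam_iterate_add_le hx₀ hd hφψ hψ fun m k => ?_⟩
        linarith [(abs_le.1 (hN N le_rfl _ (mem_range_self m) _ (mem_range_self k))).2]
  obtain ⟨z, hz⟩ := cauchySeq_tendsto_of_complete (cauchySeq_of_tendsto_tailDiam hx₀ hdiam)
  have hTz : IsFixedPt T z := isFixedPt_of_tendsto_iterate hz hT.continuousAt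
  exact ⟨z, hTz, fun w hw => eq_of_isFixedPt hd hconv hφψ hψ_lt hw hTz, hz⟩

/-- Main Theorem: a continuous asymptotic pointwise contraction on a
complete metric space with a bounded orbit has a unique fixed point, and the
iterates from the point with bounded orbit converge to it. -/
theorem stmt_4 {X : Type*} [MetricSpace X] [CompleteSpace X]
    (T : X → X) (hT : Continuous T)
    (φ : ℕ → X → X → ℝ) (φlim : X → X → ℝ)
    (hφ_nonneg : ∀ n x y, 0 ≤ φ n x y)
    (hφlim_nonneg : ∀ x y, 0 ≤ φlim x y)
    (hd : ∀ n x y, dist (T^[n] x) (T^[n] y) ≤ φ n x y)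
    (hconv : ∀ x y, Tendsto (fun n => φ n x y) atTop (nhds (φlim x y)))
    (hunif : ∀ B : Set X, Bornology.IsBounded B → ∀ ε > 0, ∃ N, ∀ n ≥ N,
      ∀ x ∈ B, ∀ y ∈ B, |φ n x y - φlim x y| ≤ ε)
    (ψ : ℝ → ℝ)
    (hψ_nonneg : ∀ t, 0 ≤ t → 0 ≤ ψ t)
    (hψ_mono : ∀ s t, 0 ≤ s → s ≤ t → ψ s ≤ ψ t)
    (hψ_usc : ∀ t₀, 0 ≤ t₀ → limsup ψ (nhdsWithin t₀ (Ioi t₀)) ≤ ψ t₀)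
    (hψ_lt : ∀ t, 0 < t → ψ t < t)
    (hφψ : ∀ x y, φlim x y ≤ ψ (max (dist x y) (max (dist (T x) x)
      (max (dist (T y) y) (max (dist (T y) x) (dist (T x) y))))))
    (x₀ : X) (hx₀ : Bornology.IsBounded (Set.range fun n => T^[n] x₀)) :
    ∃ z : X, T z = z ∧ (∀ w, T w = w → w = z) ∧
      Tendsto (fun n => T^[n] x₀) atTop (nhds z) :=
  stmt_4_general T hT φ φlim hd hconv hunif ψ hψ_mono hψ_usc hψ_lt hφψ x₀ hx₀
end

section
/- Let (X,d) be a complete metric space, let M be a nonempty bounded closed subset of X, and let T : M → M be continuous. Suppose there exist functions φₙ : M × M → [0,∞) with d(Tⁿx, Tⁿy) ≤ φₙ(x,y) for all x,y ∈ M and n ∈ ℕ, such that φₙ converges pointwise to φ : M × M → [0,∞) uniformly on B × B for every bounded subset B ⊂ M; and suppose there is ψ : [0,∞) → [0,∞), nondecreasing, right upper semicontinuous, with ψ(t) < t for all t > 0, such that φ(x,y) ≤ ψ(M(x,y)) for all x,y ∈ M, where M(x,y) = max{d(x,y), d(Tx,x), d(Ty,y), d(Ty,x), d(Tx,y)}.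 Then T has a unique fixed point z ∈ M and for every x ∈ M the iterates Tⁿx converge to z. -/
open Set Filter Function
open Topology

/-- a continuous asymptotic pointwise contraction on a nonempty
bounded closed subset of a complete metric space has a unique fixed point, and
all iterates converge to it. The subset is formalized as a subtype. -/
theorem stmt_5 {X : Type*} [MetricSpace X] [CompleteSpace X]
    (M : Set X) (hM_ne : M.Nonempty) (hM_bdd : Bornology.IsBounded M)
    (hM_cl : IsClosed M)
    (T : M → M) (hT : Continuous T)
    (φ : ℕ → M → M → ℝ) (φlim : M → M → ℝ)
    (hφ_nonneg : ∀ n x y, 0 ≤ φ n x y)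
    (hφlim_nonneg : ∀ x y, 0 ≤ φlim x y)
    (hd : ∀ n x y, dist (T^[n] x) (T^[n] y) ≤ φ n x y)
    (hconv : ∀ x y, Tendsto (fun n => φ n x y) atTop (nhds (φlim x y)))
    (hunif : ∀ B : Set M, Bornology.IsBounded B → ∀ ε > 0, ∃ N, ∀ n ≥ N,
      ∀ x ∈ B, ∀ y ∈ B, |φ n x y - φlim x y| ≤ ε)
    (ψ : ℝ → ℝ)
    (hψ_nonneg : ∀ t, 0 ≤ t → 0 ≤ ψ t)
    (hψ_mono : ∀ s t, 0 ≤ s → s ≤ t → ψ s ≤ ψ t)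
    (hψ_usc : ∀ t₀, 0 ≤ t₀ → limsup ψ (nhdsWithin t₀ (Ioi t₀)) ≤ ψ t₀)
    (hψ_lt : ∀ t, 0 < t → ψ t < t)
    (hφψ : ∀ x y, φlim x y ≤ ψ (max (dist x y) (max (dist (T x) x)
      (max (dist (T y) y) (max (dist (T y) x) (dist (T x) y)))))) :
    ∃ z : M, T z = z ∧ (∀ w, T w = w → w = z) ∧
      ∀ x : M, Tendsto (fun n => T^[n] x) atTop (nhds z) := by
  haveI : Nonempty M := hM_ne.to_subtype
  haveI : CompleteSpace M := hM_cl.completeSpace_coe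
  -- the whole space (as a subtype) is bounded
  have hub : Bornology.IsBounded (univ : Set M) := by
    rw [Metric.isBounded_iff]
    exact ⟨Metric.diam (M : Set X), fun x _ y _ => by
      rw [Subtype.dist_eq]; exact Metric.dist_le_diam_of_mem hM_bdd x.2 y.2⟩
  set A : ℕ → Set M := fun n => Set.range (T^[n]) with hA
  have hmem : ∀ (n : ℕ) (x : M), T^[n] x ∈ A n := fun n x => ⟨x, rfl⟩
  have hAsub : ∀ k n : ℕ, k ≤ n → A n ⊆ A k := by
    rintro k n hkn a ⟨u, hu⟩
    obtain ⟨c, rfl⟩ := le_iff_exists_add.mp hkn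
    exact ⟨T^[c] u, by rw [← hu, Function.iterate_add_apply]⟩
  have hbdd : ∀ n, Bornology.IsBounded (A n) := fun n => hub.subset (subset_univ _)
  set d : ℕ → ℝ := fun n => Metric.diam (A n) with hdd
  have hd0 : ∀ n, 0 ≤ d n := fun n => Metric.diam_nonneg
  have hanti : Antitone d := fun k n h => Metric.diam_mono (hAsub k n h) (hbdd k)
  set L : ℝ := ⨅ n, d n with hL
  have hbdl : BddBelow (Set.range d) := ⟨0, by rintro r ⟨n, rfl⟩; exact hd0 n⟩
  have hLle : ∀ n, L ≤ d n := fun n => ciInf_le hbdl n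
  have hL0 : 0 ≤ L := le_ciInf hd0
  have hdL : Tendsto d atTop (𝓝 L) := tendsto_atTop_ciInf hanti hbdl
  -- key inequality : L ≤ ψ (d k) for all k
  have hkey : ∀ k, L ≤ ψ (d k) := by
    intro k
    refine le_of_forall_pos_le_add ?_
    intro ε hε
    obtain ⟨N, hN⟩ := hunif univ hub ε hε
    refine le_trans (hLle (N + k)) ?_
    refine Metric.diam_le_of_forall_dist_le
      (add_nonneg (hψ_nonneg _ (hd0 k)) hε.le) ?_
    rintro a ⟨u, rfl⟩ b ⟨v, rfl⟩
    rw [Function.iterate_add_apply, Function.iterate_add_apply]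
    set x' := T^[k] u with hx'
    set y' := T^[k] v with hy'
    have hx : x' ∈ A k := hmem k u
    have hy : y' ∈ A k := hmem k v
    have hTx : T x' ∈ A k :=
      hAsub k (k + 1) (Nat.le_succ k) ⟨u, (Function.iterate_succ_apply' T k u)⟩
    have hTy : T y' ∈ A k :=
      hAsub k (k + 1) (Nat.le_succ k) ⟨v, (Function.iterate_succ_apply' T k v)⟩
    have hMle : max (dist x' y') (max (dist (T x') x') (max (dist (T y') y')
        (max (dist (T y') x') (dist (T x') y')))) ≤ d k := by
      simp only [max_le_iff]
      exact ⟨Metric.dist_le_diam_of_mem (hbdd k) hx hy,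
        Metric.dist_le_diam_of_mem (hbdd k) hTx hx,
        Metric.dist_le_diam_of_mem (hbdd k) hTy hy,
        Metric.dist_le_diam_of_mem (hbdd k) hTy hx,
        Metric.dist_le_diam_of_mem (hbdd k) hTx hy⟩
    have h1 : dist (T^[N] x') (T^[N] y') ≤ φ N x' y' := hd N x' y'
    have h2 : |φ N x' y' - φlim x' y'| ≤ ε := hN N le_rfl x' (mem_univ _) y' (mem_univ _)
    have h3 : φlim x' y' ≤ ψ (max (dist x' y') (max (dist (T x') x') (max (dist (T y') y')
        (max (dist (T y') x') (dist (T x') y'))))) := hφψ x' y'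
    have h4 : ψ (max (dist x' y') (max (dist (T x') x') (max (dist (T y') y')
        (max (dist (T y') x') (dist (T x') y'))))) ≤ ψ (d k) :=
      hψ_mono _ _ (le_trans dist_nonneg (le_max_left _ _)) hMle
    have := abs_le.mp h2
    linarith
  -- L must be 0
  have hLzero : L = 0 := by
    by_contra hne
    have hLpos : 0 < L := lt_of_le_of_ne hL0 (Ne.symm hne)
    have hψL : ψ L < L := hψ_lt L hLpos
    by_cases hcase : ∃ k, d k = L
    · obtain ⟨k, hk⟩ := hcase
      have := hkey k
      rw [hk] at this
      linarith
    · push_neg at hcase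
      have hgt : ∀ k, L < d k := fun k => lt_of_le_of_ne (hLle k) (Ne.symm (hcase k))
      have hbound : IsBoundedUnder (· ≤ ·) (𝓝[>] L) ψ := by
        refine ⟨ψ (L + 1), ?_⟩
        rw [eventually_map]
        filter_upwards [Ioo_mem_nhdsGT_of_mem (by
          constructor
          · exact le_refl L
          · exact lt_add_one L)] with t ht
        exact hψ_mono t (L + 1) (le_of_lt (lt_of_le_of_lt hL0 ht.1)) ht.2.le
      have hlim : limsup ψ (𝓝[>] L) < L := lt_of_le_of_lt (hψ_usc L hL0) hψL
      have hev : ∀ᶠ t in 𝓝[>] L, ψ t < L := eventually_lt_of_limsup_lt hlim hbound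
      have hdL' : Tendsto d atTop (𝓝[>] L) :=
        tendsto_nhdsWithin_of_tendsto_nhds_of_eventually_within d hdL
          (Eventually.of_forall hgt)
      obtain ⟨k, h1, h2⟩ := ((hdL'.eventually hev).and (Eventually.of_forall hkey)).exists
      linarith
  rw [hLzero] at hdL
  -- construct the fixed point as the limit of one orbit
  set x0 : M := Classical.arbitrary M with hx0
  have hcauchy : CauchySeq (fun n => T^[n] x0) := by
    apply cauchySeq_of_le_tendsto_0 d ?_ hdL
    intro n m N hn hm
    exact Metric.dist_le_diam_of_mem (hbdd N) (hAsub N n hn (hmem n x0))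
      (hAsub N m hm (hmem m x0))
  obtain ⟨z, hz⟩ := cauchySeq_tendsto_of_complete hcauchy
  -- all orbits converge to z
  have hall : ∀ x : M, Tendsto (fun n => T^[n] x) atTop (𝓝 z) := by
    intro x
    rw [tendsto_iff_dist_tendsto_zero]
    apply squeeze_zero (fun n => dist_nonneg) (fun n => dist_triangle (T^[n] x) (T^[n] x0) z)
    have h1 : Tendsto (fun n => dist (T^[n] x) (T^[n] x0)) atTop (𝓝 0) :=
      squeeze_zero (fun n => dist_nonneg)
        (fun n => Metric.dist_le_diam_of_mem (hbdd n) (hmem n x) (hmem n x0)) hdL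
    have h2 : Tendsto (fun n => dist (T^[n] x0) z) atTop (𝓝 0) :=
      tendsto_iff_dist_tendsto_zero.mp hz
    simpa using h1.add h2
  have hfix : T z = z := by
    have h1 : Tendsto (fun n => T^[n + 1] x0) atTop (𝓝 z) :=
      (hall x0).comp (tendsto_add_atTop_nat 1)
    have h2 : Tendsto (fun n => T (T^[n] x0)) atTop (𝓝 (T z)) :=
      (hT.tendsto z).comp (hall x0)
    have heq : (fun n => T^[n + 1] x0) = fun n => T (T^[n] x0) :=
      funext fun n => Function.iterate_succ_apply' T n x0
    rw [heq] at h1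
    exact tendsto_nhds_unique h2 h1
  refine ⟨z, hfix, ?_, hall⟩
  intro w hw
  have hconst : Tendsto (fun _ : ℕ => w) atTop (𝓝 z) := by
    have := hall w
    have hw' : (fun n : ℕ => T^[n] w) = fun _ => w :=
      funext fun n => Function.iterate_fixed hw n
    rwa [hw'] at this
  exact tendsto_nhds_unique tendsto_const_nhds hconst
end

section
/- Let (X,d) be a complete metric space and T : X → X continuous. Suppose there exist functions φₙ : X × X → [0,∞) with d(Tⁿx, Tⁿy) ≤ φₙ(x,y) for all x,y ∈ X and n ∈ ℕ, such that φₙ converges pointwise to φ : X × X → [0,∞) uniformly on B × B for every bounded subset B ⊂ X; and suppose there is ψ : [0,∞) → [0,∞), nondecreasing, right upper semicontinuous, with ψ(t) < t for all t > 0, such that φ(x,y) ≤ ψ(M(x,y)) for all x,y, where M(x,y) = max{d(x,y), d(Tx,x), d(Ty,y), d(Ty,x), d(Tx,y)}. If T has a fixed point p ∈ X (Tp = p), then for every x ∈ X the iterates Tⁿx converge to p. -/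
/-!
Fix `x` and put `U k = {p} ∪ {Tᵐ x : m ≥ k}`. Since `d(Tⁿx, p) = d(Tⁿx, Tⁿp) ≤ φₙ(x, p)` and
`φₙ(x, p)` converges, these sets are bounded; they are `T`-invariant and decreasing, and
`U (k + N) ⊆ Tᴺ '' U k`. For `u, v ∈ U k` all five distances in `M(u, v)` are at most
`D k = diam (U k)`, so uniform convergence on `U 0` gives `D (k + N) ≤ ψ (D k) + ε` for large `N`.
Hence the limit `L` of the decreasing sequence `D` satisfies `L ≤ ψ t` for every `t > L`, so
`L ≤ limsup_{t → L⁺} ψ t ≤ ψ L`, which forces `L = 0` because `ψ t < t` for `t > 0`.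
Finally `d(Tᵏx, p) ≤ D k`.
-/

open Set Filter Function Metric Topology

section RealFunction

variable {ψ : ℝ → ℝ}

lemma eq_zero_of_forall_lt_le_apply {L : ℝ} (hL : 0 ≤ L)
    (hψ_mono : ∀ s t, 0 ≤ s → s ≤ t → ψ s ≤ ψ t)
    (hψ_usc : limsup ψ (𝓝[>] L) ≤ ψ L) (hψ_lt : ∀ t, 0 < t → ψ t < t)
    (hLψ : ∀ t, L < t → L ≤ ψ t) : L = 0 := by
  by_contra hne
  have hbdd : IsBoundedUnder (· ≤ ·) (𝓝[>] L) ψ := by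
    refine ⟨ψ (L + 1), eventually_map.2 ?_⟩
    filter_upwards [Ioo_mem_nhdsGT (lt_add_one L)] with s hs
    exact hψ_mono s (L + 1) (hL.trans hs.1.le) hs.2.le
  have hLψ' : ∀ᶠ t in 𝓝[>] L, L ≤ ψ t := eventually_mem_nhdsWithin.mono hLψ
  have hL_le : L ≤ limsup ψ (𝓝[>] L) := le_limsup_of_frequently_le hLψ'.frequently hbdd
  linarith [hψ_lt L (lt_of_le_of_ne hL (Ne.symm hne))]

lemma Antitone.tendsto_zero_of_forall_le_apply_add {D : ℕ → ℝ} (hD : Antitone D)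
    (hD_nonneg : ∀ k, 0 ≤ D k)
    (hψ_mono : ∀ s t, 0 ≤ s → s ≤ t → ψ s ≤ ψ t)
    (hψ_usc : ∀ t₀, 0 ≤ t₀ → limsup ψ (𝓝[>] t₀) ≤ ψ t₀) (hψ_lt : ∀ t, 0 < t → ψ t < t)
    (hstep : ∀ ε > 0, ∃ N, ∀ k, D (k + N) ≤ ψ (D k) + ε) :
    Tendsto D atTop (𝓝 0) := by
  have hbdd : BddBelow (range D) := ⟨0, forall_mem_range.2 hD_nonneg⟩
  have hL : 0 ≤ ⨅ k, D k := le_ciInf hD_nonneg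
  have hLψ : ∀ t, ⨅ k, D k < t → ⨅ k, D k ≤ ψ t := by
    intro t ht
    obtain ⟨k, hk⟩ := exists_lt_of_ciInf_lt ht
    refine le_of_forall_pos_le_add fun ε hε => ?_
    obtain ⟨N, hN⟩ := hstep ε hε
    calc ⨅ k, D k ≤ D (k + N) := ciInf_le hbdd (k + N)
      _ ≤ ψ (D k) + ε := hN k
      _ ≤ ψ t + ε := by gcongr; exact hψ_mono _ _ (hD_nonneg k) hk.le
  have hL0 := eq_zero_of_forall_lt_le_apply hL hψ_mono (hψ_usc _ hL) hψ_lt hLψ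
  simpa [hL0] using tendsto_atTop_ciInf hD hbdd

end RealFunction

section Orbit

variable {X : Type*} (T : X → X)

def tailOrbit (x : X) (k : ℕ) : Set X := (fun m => T^[m] x) '' Ici k

variable {T}

lemma iterate_mem_tailOrbit {x : X} {k m : ℕ} (h : k ≤ m) : T^[m] x ∈ tailOrbit T x k :=
  ⟨m, h, rfl⟩

lemma tailOrbit_antitone (x : X) : Antitone (tailOrbit T x) :=
  fun _ _ h => image_mono (Ici_subset_Ici.2 h)

lemma tailOrbit_subset_range (x : X) (k : ℕ) : tailOrbit T x k ⊆ range fun m => T^[m] x :=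
  image_subset_range _ _

lemma mapsTo_insert_tailOrbit {p : X} (hp : T p = p) (x : X) (k : ℕ) :
    MapsTo T (insert p (tailOrbit T x k)) (insert p (tailOrbit T x k)) := by
  rintro u (rfl | ⟨m, hm, rfl⟩)
  · rw [hp]
    exact mem_insert u _
  · rw [← iterate_succ_apply' T m x]
    exact mem_insert_of_mem _ (iterate_mem_tailOrbit (Nat.le_succ_of_le hm))

lemma insert_tailOrbit_add_subset_image {p : X} (hp : T p = p) (x : X) (k N : ℕ) :
    insert p (tailOrbit T x (k + N)) ⊆ T^[N] '' insert p (tailOrbit T x k) := by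
  rintro u (rfl | ⟨m, hm, rfl⟩)
  · exact ⟨u, mem_insert u _, iterate_fixed hp N⟩
  · refine ⟨T^[m - N] x, mem_insert_of_mem _ (iterate_mem_tailOrbit (by grind)), ?_⟩
    rw [← iterate_add_apply, Nat.add_sub_cancel' (by grind)]

variable [MetricSpace X]

lemma isBounded_range_iterate_of_tendsto {φ : ℕ → X → X → ℝ} {φlim : X → X → ℝ}
    (hd : ∀ n x y, dist (T^[n] x) (T^[n] y) ≤ φ n x y)
    (hconv : ∀ x y, Tendsto (fun n => φ n x y) atTop (𝓝 (φlim x y)))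
    {p : X} (hp : T p = p) (x : X) : Bornology.IsBounded (range fun n => T^[n] x) := by
  obtain ⟨R, hR⟩ := (hconv x p).bddAbove_range
  refine (isBounded_closedBall (x := p) (r := R)).subset (range_subset_iff.2 fun n => ?_)
  calc dist (T^[n] x) p = dist (T^[n] x) (T^[n] p) := by rw [iterate_fixed hp]
    _ ≤ φ n x p := hd n x p
    _ ≤ R := hR ⟨n, rfl⟩

lemma max_dist_le_diam_of_mapsTo {U : Set X} (hU : Bornology.IsBounded U) (hTU : MapsTo T U U)
    {u v : X} (hu : u ∈ U) (hv : v ∈ U) :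
    max (dist u v) (max (dist (T u) u)
      (max (dist (T v) v) (max (dist (T v) u) (dist (T u) v)))) ≤ diam U := by
  have hTu := hTU hu
  have hTv := hTU hv
  simp only [max_le_iff]
  exact ⟨dist_le_diam_of_mem hU hu hv, dist_le_diam_of_mem hU hTu hu,
    dist_le_diam_of_mem hU hTv hv, dist_le_diam_of_mem hU hTv hu, dist_le_diam_of_mem hU hTu hv⟩

lemma diam_image_iterate_le {φ : X → X → ℝ} {φlim : X → X → ℝ} {ψ : ℝ → ℝ} {N : ℕ} {ε : ℝ}
    (hd : ∀ x y, dist (T^[N] x) (T^[N] y) ≤ φ x y)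
    (hψ_mono : ∀ s t, 0 ≤ s → s ≤ t → ψ s ≤ ψ t)
    (hφψ : ∀ x y, φlim x y ≤ ψ (max (dist x y) (max (dist (T x) x)
      (max (dist (T y) y) (max (dist (T y) x) (dist (T x) y))))))
    {U : Set X} (hU : Bornology.IsBounded U) (hU_ne : U.Nonempty) (hTU : MapsTo T U U)
    (hφ : ∀ x ∈ U, ∀ y ∈ U, |φ x y - φlim x y| ≤ ε) :
    diam (T^[N] '' U) ≤ ψ (diam U) + ε := by
  refine diam_le_of_forall_dist_le_of_nonempty (hU_ne.image _) ?_
  rintro _ ⟨u, hu, rfl⟩ _ ⟨v, hv, rfl⟩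
  calc dist (T^[N] u) (T^[N] v) ≤ φ u v := hd u v
    _ ≤ φlim u v + ε := by linarith [(abs_le.1 (hφ u hu v hv)).2]
    _ ≤ ψ (diam U) + ε := by
      gcongr
      exact (hφψ u v).trans (hψ_mono _ _ (dist_nonneg.trans (le_max_left _ _))
        (max_dist_le_diam_of_mapsTo hU hTU hu hv))

end Orbit

theorem stmt_6_general {X : Type*} [MetricSpace X]
    (T : X → X)
    (φ : ℕ → X → X → ℝ) (φlim : X → X → ℝ)
    (hd : ∀ n x y, dist (T^[n] x) (T^[n] y) ≤ φ n x y)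
    (hconv : ∀ x y, Tendsto (fun n => φ n x y) atTop (nhds (φlim x y)))
    (hunif : ∀ B : Set X, Bornology.IsBounded B → ∀ ε > 0, ∃ N, ∀ n ≥ N,
      ∀ x ∈ B, ∀ y ∈ B, |φ n x y - φlim x y| ≤ ε)
    (ψ : ℝ → ℝ)
    (hψ_mono : ∀ s t, 0 ≤ s → s ≤ t → ψ s ≤ ψ t)
    (hψ_usc : ∀ t₀, 0 ≤ t₀ → limsup ψ (nhdsWithin t₀ (Ioi t₀)) ≤ ψ t₀)
    (hψ_lt : ∀ t, 0 < t → ψ t < t)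
    (hφψ : ∀ x y, φlim x y ≤ ψ (max (dist x y) (max (dist (T x) x)
      (max (dist (T y) y) (max (dist (T y) x) (dist (T x) y))))))
    (p : X) (hp : T p = p) :
    ∀ x : X, Tendsto (fun n => T^[n] x) atTop (nhds p) := by
  intro x
  set U : ℕ → Set X := fun k => insert p (tailOrbit T x k)
  have hU : ∀ k, Bornology.IsBounded (U k) := fun k =>
    ((isBounded_range_iterate_of_tendsto hd hconv hp x).subset
      (tailOrbit_subset_range x k)).insert p
  have hD : Antitone fun k => diam (U k) := fun i j hij =>
    diam_mono (insert_subset_insert (tailOrbit_antitone x hij)) (hU i)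
  have hstep : ∀ ε > 0, ∃ N, ∀ k, diam (U (k + N)) ≤ ψ (diam (U k)) + ε := by
    intro ε hε
    obtain ⟨N, hN⟩ := hunif (U 0) (hU 0) ε hε
    refine ⟨N, fun k => ?_⟩
    have hUk0 : U k ⊆ U 0 := insert_subset_insert (tailOrbit_antitone x (Nat.zero_le k))
    have hTU : MapsTo T (U k) (U k) := mapsTo_insert_tailOrbit hp x k
    calc diam (U (k + N)) ≤ diam (T^[N] '' U k) :=
          diam_mono (insert_tailOrbit_add_subset_image hp x k N)
            ((hU k).subset (hTU.iterate N).image_subset)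
      _ ≤ ψ (diam (U k)) + ε :=
          diam_image_iterate_le (hd N) hψ_mono hφψ (hU k) (insert_nonempty _ _)
            hTU fun u hu v hv => hN N le_rfl u (hUk0 hu) v (hUk0 hv)
  have hD0 :=
    hD.tendsto_zero_of_forall_le_apply_add (fun _ => diam_nonneg) hψ_mono hψ_usc hψ_lt hstep
  refine tendsto_iff_dist_tendsto_zero.2 (squeeze_zero (fun _ => dist_nonneg) (fun k => ?_) hD0)
  exact dist_le_diam_of_mem (hU k) (mem_insert_of_mem _ (iterate_mem_tailOrbit le_rfl))
    (mem_insert p _)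

/-- if a continuous asymptotic pointwise contraction on a complete
metric space has a fixed point p, then the iterates of every point converge to p. -/
theorem stmt_6 {X : Type*} [MetricSpace X] [CompleteSpace X]
    (T : X → X) (hT : Continuous T)
    (φ : ℕ → X → X → ℝ) (φlim : X → X → ℝ)
    (hφ_nonneg : ∀ n x y, 0 ≤ φ n x y)
    (hφlim_nonneg : ∀ x y, 0 ≤ φlim x y)
    (hd : ∀ n x y, dist (T^[n] x) (T^[n] y) ≤ φ n x y)
    (hconv : ∀ x y, Tendsto (fun n => φ n x y) atTop (nhds (φlim x y)))
    (hunif : ∀ B : Set X, Bornology.IsBounded B → ∀ ε > 0, ∃ N, ∀ n ≥ N,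
      ∀ x ∈ B, ∀ y ∈ B, |φ n x y - φlim x y| ≤ ε)
    (ψ : ℝ → ℝ)
    (hψ_nonneg : ∀ t, 0 ≤ t → 0 ≤ ψ t)
    (hψ_mono : ∀ s t, 0 ≤ s → s ≤ t → ψ s ≤ ψ t)
    (hψ_usc : ∀ t₀, 0 ≤ t₀ → limsup ψ (nhdsWithin t₀ (Ioi t₀)) ≤ ψ t₀)
    (hψ_lt : ∀ t, 0 < t → ψ t < t)
    (hφψ : ∀ x y, φlim x y ≤ ψ (max (dist x y) (max (dist (T x) x)
      (max (dist (T y) y) (max (dist (T y) x) (dist (T x) y))))))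
    (p : X) (hp : T p = p) :
    ∀ x : X, Tendsto (fun n => T^[n] x) atTop (nhds p) :=
  stmt_6_general T φ φlim hd hconv hunif ψ hψ_mono hψ_usc hψ_lt hφψ p hp
end

section
/- Let (X,d) be a metric space, T : X → X a map, and x₀ ∈ X a point with bounded orbit; set xₙ = Tⁿx₀ and bₙ = sup_{i,j ≥ n} d(xᵢ, xⱼ). Suppose there exist functions φₙ : X × X → [0,∞) with d(Tⁿx, Tⁿy) ≤ φₙ(x,y) for all x,y ∈ X and n ∈ ℕ, such that φₙ converges to φ : X × X → [0,∞) uniformly on B × B for every bounded subset B ⊂ X; and suppose there is ψ : [0,∞) → [0,∞), nondecreasing, right upper semicontinuous, with ψ(t) < t for all t > 0, such that φ(x,y) ≤ ψ(M(x,y)) for all x,y, where M(x,y) = max{d(x,y), d(Tx,x), d(Ty,y), d(Ty,x), d(Tx,y)}. Let g(t) = sup_{0 ≤ s ≤ t} ψ(s). Then for every ε > 0 there exists M ∈ ℕ such that b_{n+M} ≤ g(bₙ) + ε for all n ∈ ℕ. -/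
/-!
Since `ψ` is nondecreasing, `g = ψ` on `[0, ∞)`. Choose `N` with `φ_N` within `ε` of `φ` on the
orbit. For `i, j ≥ n + N` write `xᵢ = T^N u`, `xⱼ = T^N v` with `u = x_{i-N}`, `v = x_{j-N}`; then
`d(xᵢ, xⱼ) ≤ φ_N(u, v) ≤ φ(u, v) + ε ≤ ψ(M(u, v)) + ε`, and `M(u, v) ≤ bₙ` because the five
distances in `M(u, v)` are all between orbit points of index at least `n`.
-/

open Set Filter Function

section TailDists

variable {X : Type*} [PseudoMetricSpace X]

/-- `sSup (tailDists x n)` is the tail diameter `bₙ`. -/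
def tailDists (x : ℕ → X) (n : ℕ) : Set ℝ :=
  {r | ∃ i j : ℕ, n ≤ i ∧ n ≤ j ∧ r = dist (x i) (x j)}

theorem bddAbove_tailDists {x : ℕ → X} (hx : Bornology.IsBounded (range x)) (n : ℕ) :
    BddAbove (tailDists x n) := by
  obtain ⟨C, hC⟩ := Metric.isBounded_iff.mp hx
  refine ⟨C, ?_⟩
  rintro r ⟨i, j, -, -, rfl⟩
  exact hC (mem_range_self i) (mem_range_self j)

theorem dist_le_sSup_tailDists {x : ℕ → X} (hx : Bornology.IsBounded (range x)) {n i j : ℕ}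
    (hi : n ≤ i) (hj : n ≤ j) : dist (x i) (x j) ≤ sSup (tailDists x n) :=
  le_csSup (bddAbove_tailDists hx n) ⟨i, j, hi, hj, rfl⟩

theorem sSup_tailDists_nonneg {x : ℕ → X} (hx : Bornology.IsBounded (range x)) (n : ℕ) :
    0 ≤ sSup (tailDists x n) :=
  dist_nonneg.trans (dist_le_sSup_tailDists hx le_rfl le_rfl)

theorem sSup_tailDists_le {x : ℕ → X} {n : ℕ} {c : ℝ}
    (h : ∀ i j, n ≤ i → n ≤ j → dist (x i) (x j) ≤ c) : sSup (tailDists x n) ≤ c := by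
  refine csSup_le ⟨_, n, n, le_rfl, le_rfl, rfl⟩ ?_
  rintro r ⟨i, j, hi, hj, rfl⟩
  exact h i j hi hj

/-- The quantity `M(x, y)` of the contractive condition. -/
def maxDist (T : X → X) (x y : X) : ℝ :=
  max (dist x y) (max (dist (T x) x) (max (dist (T y) y) (max (dist (T y) x) (dist (T x) y))))

theorem maxDist_iterate_le {T : X → X} {x₀ : X} {n p q : ℕ} {c : ℝ}
    (h : ∀ i j, n ≤ i → n ≤ j → dist (T^[i] x₀) (T^[j] x₀) ≤ c) (hp : n ≤ p) (hq : n ≤ q) :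
    maxDist T (T^[p] x₀) (T^[q] x₀) ≤ c := by
  simp only [maxDist, ← iterate_succ_apply' T]
  exact max_le (h _ _ hp hq) <| max_le (h _ _ (by omega) hp) <| max_le (h _ _ (by omega) hq) <|
    max_le (h _ _ (by omega) hp) (h _ _ (by omega) hq)

end TailDists

theorem stmt_10_general {X : Type*} [MetricSpace X]
    (T : X → X)
    (x₀ : X) (hx₀ : Bornology.IsBounded (Set.range fun n => T^[n] x₀))
    (φ : ℕ → X → X → ℝ) (φlim : X → X → ℝ)
    (hd : ∀ n x y, dist (T^[n] x) (T^[n] y) ≤ φ n x y)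
    (hunif : ∀ B : Set X, Bornology.IsBounded B → ∀ ε > 0, ∃ N, ∀ n ≥ N,
      ∀ x ∈ B, ∀ y ∈ B, |φ n x y - φlim x y| ≤ ε)
    (ψ : ℝ → ℝ)
    (hψ_mono : ∀ s t, 0 ≤ s → s ≤ t → ψ s ≤ ψ t)
    (hφψ : ∀ x y, φlim x y ≤ ψ (max (dist x y) (max (dist (T x) x)
      (max (dist (T y) y) (max (dist (T y) x) (dist (T x) y))))))
    (b : ℕ → ℝ)
    (hb : ∀ n, b n = sSup {r : ℝ | ∃ i j : ℕ, n ≤ i ∧ n ≤ j ∧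
      r = dist (T^[i] x₀) (T^[j] x₀)})
    (g : ℝ → ℝ) (hg : ∀ t, 0 ≤ t → g t = sSup (ψ '' Icc 0 t)) :
    ∀ ε > 0, ∃ M : ℕ, ∀ n : ℕ, b (n + M) ≤ g (b n) + ε := by
  intro ε hε
  have hb' : ∀ n, b n = sSup (tailDists (fun k => T^[k] x₀) n) := hb
  have hgψ : ∀ t, 0 ≤ t → g t = ψ t := fun t ht => by
    rw [hg t ht]
    exact MonotoneOn.sSup_image_Icc ht fun s hs s' _ hss' => hψ_mono s s' hs.1 hss'
  obtain ⟨N, hN⟩ := hunif _ hx₀ ε hε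
  refine ⟨N, fun n => ?_⟩
  rw [hb', hgψ _ (hb' n ▸ sSup_tailDists_nonneg hx₀ n)]
  refine sSup_tailDists_le fun i j hi hj => ?_
  have hdist_le_b : ∀ p q, n ≤ p → n ≤ q → dist (T^[p] x₀) (T^[q] x₀) ≤ b n :=
    fun p q hp hq => hb' n ▸ dist_le_sSup_tailDists hx₀ hp hq
  set u := T^[i - N] x₀
  set v := T^[j - N] x₀
  have hφ_close := (abs_le.mp (hN N le_rfl u (mem_range_self _) v (mem_range_self _))).2
  calc dist (T^[i] x₀) (T^[j] x₀) = dist (T^[N] u) (T^[N] v) := by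
        simp only [u, v, ← iterate_add_apply, Nat.add_sub_cancel' (by omega : N ≤ i),
          Nat.add_sub_cancel' (by omega : N ≤ j)]
    _ ≤ φlim u v + ε := by linarith [hd N u v]
    _ ≤ ψ (maxDist T u v) + ε := by gcongr; exact hφψ u v
    _ ≤ ψ (b n) + ε := by
        gcongr
        exact hψ_mono _ _ (dist_nonneg.trans (le_max_left _ _))
          (maxDist_iterate_le hdist_le_b (by omega) (by omega))

/-- the tail diameters bₙ = sup_{i,j ≥ n} d(xᵢ,xⱼ) of a bounded
orbit of an asymptotic pointwise contraction satisfy: for every ε > 0 there is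
M ∈ ℕ with b_{n+M} ≤ g(bₙ) + ε for all n, where g(t) = sup_{0 ≤ s ≤ t} ψ(s). -/
theorem stmt_10 {X : Type*} [MetricSpace X]
    (T : X → X)
    (x₀ : X) (hx₀ : Bornology.IsBounded (Set.range fun n => T^[n] x₀))
    (φ : ℕ → X → X → ℝ) (φlim : X → X → ℝ)
    (hφ_nonneg : ∀ n x y, 0 ≤ φ n x y)
    (hφlim_nonneg : ∀ x y, 0 ≤ φlim x y)
    (hd : ∀ n x y, dist (T^[n] x) (T^[n] y) ≤ φ n x y)
    (hunif : ∀ B : Set X, Bornology.IsBounded B → ∀ ε > 0, ∃ N, ∀ n ≥ N,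
      ∀ x ∈ B, ∀ y ∈ B, |φ n x y - φlim x y| ≤ ε)
    (ψ : ℝ → ℝ)
    (hψ_nonneg : ∀ t, 0 ≤ t → 0 ≤ ψ t)
    (hψ_mono : ∀ s t, 0 ≤ s → s ≤ t → ψ s ≤ ψ t)
    (hψ_usc : ∀ t₀, 0 ≤ t₀ → limsup ψ (nhdsWithin t₀ (Ioi t₀)) ≤ ψ t₀)
    (hψ_lt : ∀ t, 0 < t → ψ t < t)
    (hφψ : ∀ x y, φlim x y ≤ ψ (max (dist x y) (max (dist (T x) x)
      (max (dist (T y) y) (max (dist (T y) x) (dist (T x) y))))))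
    (b : ℕ → ℝ)
    (hb : ∀ n, b n = sSup {r : ℝ | ∃ i j : ℕ, n ≤ i ∧ n ≤ j ∧
      r = dist (T^[i] x₀) (T^[j] x₀)})
    (g : ℝ → ℝ) (hg : ∀ t, 0 ≤ t → g t = sSup (ψ '' Icc 0 t)) :
    ∀ ε > 0, ∃ M : ℕ, ∀ n : ℕ, b (n + M) ≤ g (b n) + ε :=
  stmt_10_general T x₀ hx₀ φ φlim hd hunif ψ hψ_mono hφψ b hb g hg
end

section
/- Let {bₙ} be a nonincreasing sequence of nonnegative real numbers and let g : [0,∞) → [0,∞) be nondecreasing, right continuous, and satisfy g(t) < t for all t > 0. Suppose that for every ε > 0 there exists M ∈ ℕ such that b_{n+M} ≤ g(bₙ) + ε for all n ∈ ℕ. Then bₙ → 0. -/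
open Set Filter

/-- if {bₙ} is nonincreasing and nonnegative, g : [0,∞) → [0,∞) is
nondecreasing, right continuous, with g(t) < t for t > 0, and for every ε > 0
there is M with b_{n+M} ≤ g(bₙ) + ε for all n, then bₙ → 0. -/
theorem stmt_11 (b : ℕ → ℝ)
    (hb_nonneg : ∀ n, 0 ≤ b n)
    (hb_anti : ∀ m n : ℕ, m ≤ n → b n ≤ b m)
    (g : ℝ → ℝ)
    (hg_nonneg : ∀ t, 0 ≤ t → 0 ≤ g t)
    (hg_mono : ∀ s t, 0 ≤ s → s ≤ t → g s ≤ g t)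
    (hg_rc : ∀ t₀, 0 ≤ t₀ → Tendsto g (nhdsWithin t₀ (Ioi t₀)) (nhds (g t₀)))
    (hg_lt : ∀ t, 0 < t → g t < t)
    (h : ∀ ε > 0, ∃ M : ℕ, ∀ n : ℕ, b (n + M) ≤ g (b n) + ε) :
    Tendsto b atTop (nhds 0) := by
  have hbdd : BddBelow (Set.range b) := ⟨0, by rintro x ⟨n, rfl⟩; exact hb_nonneg n⟩
  set L := ⨅ n, b n with hL
  have hanti : Antitone b := fun m n hmn => hb_anti m n hmn
  have htend : Tendsto b atTop (nhds L) := tendsto_atTop_ciInf hanti hbdd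
  have hL0 : 0 ≤ L := le_ciInf hb_nonneg
  have hLle : ∀ n, L ≤ b n := fun n => ciInf_le hbdd n
  rcases eq_or_lt_of_le hL0 with hLeq | hLpos
  · rwa [← hLeq] at htend
  exfalso
  set ε₀ := (L - g L) / 3 with hε₀
  have hgL : g L < L := hg_lt L hLpos
  have hε₀pos : 0 < ε₀ := by simp only [hε₀]; linarith
  -- right continuity: eventually g t < g L + ε₀ on (L, ∞) near L
  have hev : ∀ᶠ t in nhdsWithin L (Ioi L), g t < g L + ε₀ :=
    (hg_rc L hL0).eventually (eventually_lt_nhds (by linarith))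
  rcases mem_nhdsGT_iff_exists_Ioo_subset.mp hev with ⟨u, hu, hsub⟩
  have huL : L < u := hu
  -- choose n with b n < u
  have hbn : ∀ᶠ n in atTop, b n < u := htend.eventually (eventually_lt_nhds huL)
  rcases hbn.exists with ⟨n, hn⟩
  -- apply h with ε₀
  rcases h ε₀ hε₀pos with ⟨M, hM⟩
  have hkey : b (n + M) ≤ g (b n) + ε₀ := hM n
  have hgbn : g (b n) ≤ g L + ε₀ := by
    rcases eq_or_lt_of_le (hLle n) with heq | hlt
    · rw [← heq]; linarith
    · exact le_of_lt (hsub ⟨hlt, hn⟩)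
  have : L ≤ b (n + M) := hLle _
  have : b (n + M) < L := by
    calc b (n + M) ≤ g (b n) + ε₀ := hkey
      _ ≤ g L + 2 * ε₀ := by linarith
      _ < L := by simp only [hε₀]; linarith
  linarith
end
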